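/- With the weighted-graph setup below, for a map T̂ : F → ℝ with T̂ f > 0 for all f, the following are equivalent: (i) T̂ ∈ 𝒯, i.e. for every nonempty F' ⊆ F, Σ_{f ∈ F'} T̂ f < Σ_{e ∈ E(F')} 2·θ e; (ii) there exists a unique k : F → ℝ with k f > 0 for all f such that Ttot k f = T̂ f for every f ∈ F. (This is the combinatorial content of the existence and uniqueness theorem for ideal spherical circle patterns with prescribed total geodesic curvatures, since the pattern is determined up to isometry by the vector of geodesic curvatures k.) -/

import Mathlib

open Real Filter Finset
open Topology

/-- Total geodesic curvature of the arc of the first circle bounding the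
intersection bigon of two spherical disks with boundary geodesic curvatures
`a`, `b` intersecting at interior angle `θ`. -/
noncomputable def T (a b θ : ℝ) : ℝ :=
  (2 * a / Real.sqrt (a ^ 2 + 1)) *
    Real.arctan (Real.sin θ * Real.sqrt (a ^ 2 + 1) / (b + a * Real.cos θ))

/-- Total geodesic curvature of the boundary circle of the disk of the face `f`,
for the weighted graph with edge-to-faces map `ε`, weights `θ`, and geodesic
curvature vector `k`. -/
noncomputable def Ttot {F E : Type*} [Fintype E] [DecidableEq F]
    (ε : E → F × F) (θ : E → ℝ) (k : F → ℝ) (f : F) : ℝ :=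
  ∑ e : E,
    ((if (ε e).1 = f then T (k f) (k (ε e).2) (θ e) else 0) +
     (if (ε e).2 = f then T (k f) (k (ε e).1) (θ e) else 0))


lemma sq1_pos (a : ℝ) : (0:ℝ) < a^2 + 1 := by positivity

lemma rt_pos (a : ℝ) : 0 < Real.sqrt (a^2+1) := Real.sqrt_pos.2 (sq1_pos a)

lemma rt_sq (a : ℝ) : Real.sqrt (a^2+1) ^ 2 = a^2+1 := Real.sq_sqrt (sq1_pos a).le

lemma le_rt {a : ℝ} (ha : 0 ≤ a) : a ≤ Real.sqrt (a^2+1) := by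
  nlinarith [rt_sq a, rt_pos a]

lemma arctan_gt_div {x : ℝ} (hx : 0 < x) : x / (1 + x^2) < Real.arctan x := by
  have h : ∀ y ∈ Set.Icc (0:ℝ) x, HasDerivAt (fun y => Real.arctan y - y/(1+y^2))
      (1/(1+y^2) - (1-y^2)/(1+y^2)^2) y := by
    intro y _
    have h1 : HasDerivAt Real.arctan (1/(1+y^2)) y := by
      simpa [one_div, add_comm] using Real.hasDerivAt_arctan y
    have h2 : HasDerivAt (fun y : ℝ => y/(1+y^2)) ((1-y^2)/(1+y^2)^2) y := by
      have hden : (1:ℝ) + y^2 ≠ 0 := by positivity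
      have := (hasDerivAt_id y).div (((hasDerivAt_pow 2 y).const_add 1)) hden
      refine this.congr_deriv ?_
      simp only [id]
      norm_num
      field_simp
      ring
    exact h1.sub h2
  have key : StrictMonoOn (fun y => Real.arctan y - y/(1+y^2)) (Set.Icc 0 x) := by
    apply strictMonoOn_of_hasDerivWithinAt_pos (convex_Icc 0 x)
      (fun y hy => ((h y hy).continuousAt.continuousWithinAt))
      (fun y hy => ((h y (interior_subset hy)).hasDerivWithinAt))
    intro y hy
    rw [interior_Icc] at hy
    have hy0 : 0 < y := hy.1
    have hden : (0:ℝ) < 1 + y^2 := by positivity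
    rw [div_sub_div _ _ (ne_of_gt hden) (by positivity)]
    apply div_pos
    · ring_nf
      nlinarith
    · positivity
  have := key (Set.left_mem_Icc.2 hx.le) (Set.right_mem_Icc.2 hx.le) hx
  simpa using this

/-- the auxiliary function whose restriction to rays describes T -/
noncomputable def g (s B u : ℝ) : ℝ :=
  2*u/Real.sqrt (u^2+1) * Real.arctan (s*Real.sqrt (u^2+1)/(B*u))

lemma g_hasDerivAt {s B u : ℝ} (hB : B ≠ 0) (hu : 0 < u) :
    HasDerivAt (g s B)
      (2/(Real.sqrt (u^2+1))^3 *
        (Real.arctan (s*Real.sqrt (u^2+1)/(B*u)) -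
          (s*Real.sqrt (u^2+1)/(B*u))/(1+(s*Real.sqrt (u^2+1)/(B*u))^2))) u := by
  have hR0 : Real.sqrt (u^2+1) ≠ 0 := (rt_pos u).ne'
  have hR2 : Real.sqrt (u^2+1)^2 = u^2+1 := rt_sq u
  set R := Real.sqrt (u^2+1) with hRdef
  have hr : HasDerivAt (fun u : ℝ => Real.sqrt (u^2+1)) (u/R) u := by
    have h0 : HasDerivAt (fun u : ℝ => u^2+1) (2*u) u := by
      simpa using (hasDerivAt_pow 2 u).add_const 1
    have := h0.sqrt (by positivity)
    convert this using 1
    rw [← hRdef]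
    field_simp
  have h1 : HasDerivAt (fun u : ℝ => 2*u/Real.sqrt (u^2+1)) (2/R^3) u := by
    have hnum : HasDerivAt (fun u : ℝ => 2*u) 2 u := by simpa using (hasDerivAt_id u).const_mul 2
    have := hnum.div hr hR0
    refine this.congr_deriv ?_
    rw [← hRdef]
    field_simp
    linear_combination hR2
  have h2 : HasDerivAt (fun u : ℝ => s*Real.sqrt (u^2+1)/(B*u)) (-s/(R*B*u^2)) u := by
    have hnum : HasDerivAt (fun u : ℝ => s*Real.sqrt (u^2+1)) (s*(u/R)) u := hr.const_mul s
    have hden : HasDerivAt (fun u : ℝ => B*u) B u := by simpa using (hasDerivAt_id u).const_mul B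
    have := hnum.div hden (by positivity)
    refine this.congr_deriv ?_
    rw [← hRdef]
    field_simp
    linear_combination (-s) * hR2
  have h3 : HasDerivAt (fun u : ℝ => Real.arctan (s*Real.sqrt (u^2+1)/(B*u)))
      ((1/(1+(s*R/(B*u))^2)) * (-s/(R*B*u^2))) u := by
    have := (Real.hasDerivAt_arctan (s*R/(B*u))).comp u h2
    exact this
  have := h1.mul h3
  refine this.congr_deriv ?_
  have hw2 : (0:ℝ) < 1+(s*R/(B*u))^2 := by positivity
  rw [← hRdef]
  field_simp
  ring

lemma arctan_pos' {x : ℝ} (hx : 0 < x) : 0 < Real.arctan x := by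
  have := Real.arctan_strictMono hx
  rwa [Real.arctan_zero] at this

lemma sin_theta_pos {θ : ℝ} (h1 : 0 < θ) (h2 : θ ≤ Real.pi/2) : 0 < Real.sin θ :=
  Real.sin_pos_of_pos_of_lt_pi h1 (lt_of_le_of_lt h2 (by linarith [Real.pi_pos]))

lemma cos_theta_nonneg {θ : ℝ} (h1 : 0 < θ) (h2 : θ ≤ Real.pi/2) : 0 ≤ Real.cos θ :=
  Real.cos_nonneg_of_mem_Icc ⟨by linarith, h2⟩

lemma g_strictMonoOn {s B : ℝ} (hs : 0 < s) (hB : 0 < B) :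
    StrictMonoOn (g s B) (Set.Ioi 0) := by
  apply strictMonoOn_of_hasDerivWithinAt_pos (convex_Ioi 0)
    (fun u hu => (g_hasDerivAt hB.ne' hu).continuousAt.continuousWithinAt)
    (fun u hu => (g_hasDerivAt hB.ne' (by simpa [interior_Ioi] using hu)).hasDerivWithinAt)
  intro u hu
  rw [interior_Ioi] at hu
  have hu' : 0 < u := hu
  have hw : 0 < s*Real.sqrt (u^2+1)/(B*u) := by
    have := rt_pos u
    positivity
  have h1 := arctan_gt_div hw
  have h2 : (0:ℝ) < 2/(Real.sqrt (u^2+1))^3 := by have := rt_pos u; positivity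
  exact mul_pos h2 (by linarith)

lemma T_eq_g {a b θ : ℝ} (ha : 0 < a) :
    T a b θ = g (Real.sin θ) ((b+a*Real.cos θ)/a) a := by
  unfold T g
  congr 2
  field_simp

lemma T_pos {a b θ : ℝ} (ha : 0 < a) (hb : 0 < b) (h1 : 0 < θ) (h2 : θ ≤ Real.pi/2) :
    0 < T a b θ := by
  unfold T
  have hs := sin_theta_pos h1 h2
  have hc := cos_theta_nonneg h1 h2
  have hr := rt_pos a
  have harg : 0 < Real.sin θ * Real.sqrt (a^2+1) / (b + a*Real.cos θ) := by positivity
  exact mul_pos (by positivity) (arctan_pos' harg)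

lemma T_ray_lt {a b θ t₁ t₂ : ℝ} (ha : 0 < a) (hb : 0 < b) (h1 : 0 < θ)
    (h2 : θ ≤ Real.pi/2) (ht1 : 0 < t₁) (ht : t₁ < t₂) :
    T (t₁*a) (t₁*b) θ < T (t₂*a) (t₂*b) θ := by
  have hs := sin_theta_pos h1 h2
  have hc := cos_theta_nonneg h1 h2
  have ht2 : 0 < t₂ := ht1.trans ht
  have hB : 0 < (b+a*Real.cos θ)/a := by positivity
  have e1 : T (t₁*a) (t₁*b) θ = g (Real.sin θ) ((b+a*Real.cos θ)/a) (t₁*a) := by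
    rw [T_eq_g (by positivity)]
    congr 1
    field_simp
  have e2 : T (t₂*a) (t₂*b) θ = g (Real.sin θ) ((b+a*Real.cos θ)/a) (t₂*a) := by
    rw [T_eq_g (by positivity)]
    congr 1
    field_simp
  rw [e1, e2]
  exact g_strictMonoOn hs hB (by simp [Set.mem_Ioi]; positivity) (by simp [Set.mem_Ioi]; positivity)
    (by nlinarith)

lemma T_anti_b {a b₁ b₂ θ : ℝ} (ha : 0 < a) (hb₁ : 0 < b₁) (h1 : 0 < θ)
    (h2 : θ ≤ Real.pi/2) (hb : b₁ < b₂) : T a b₂ θ < T a b₁ θ := by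
  unfold T
  have hs := sin_theta_pos h1 h2
  have hc := cos_theta_nonneg h1 h2
  have hr := rt_pos a
  apply mul_lt_mul_of_pos_left _ (by positivity)
  apply Real.arctan_strictMono
  apply div_lt_div_of_pos_left (by positivity) (by positivity) (by linarith)

lemma T_anti_b' {a b₁ b₂ θ : ℝ} (ha : 0 < a) (hb₁ : 0 < b₁) (h1 : 0 < θ)
    (h2 : θ ≤ Real.pi/2) (hb : b₁ ≤ b₂) : T a b₂ θ ≤ T a b₁ θ := by
  rcases eq_or_lt_of_le hb with rfl | h
  · exact le_refl _
  · exact (T_anti_b ha hb₁ h1 h2 h).le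

lemma T_mono_a {a₁ a₂ b θ : ℝ} (ha₁ : 0 < a₁) (hb : 0 < b) (h1 : 0 < θ)
    (h2 : θ ≤ Real.pi/2) (ha : a₁ < a₂) : T a₁ b θ < T a₂ b θ := by
  have ha₂ : 0 < a₂ := ha₁.trans ha
  have ht : (1:ℝ) < a₂/a₁ := (one_lt_div ha₁).2 ha
  calc T a₁ b θ = T (1*a₁) (1*b) θ := by rw [one_mul, one_mul]
    _ < T ((a₂/a₁)*a₁) ((a₂/a₁)*b) θ := T_ray_lt ha₁ hb h1 h2 one_pos ht
    _ = T a₂ ((a₂/a₁)*b) θ := by rw [div_mul_cancel₀ _ ha₁.ne']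
    _ < T a₂ b θ := T_anti_b ha₂ hb h1 h2 (by nlinarith)

lemma arctan_pair {a b θ : ℝ} (ha : 0 < a) (hb : 0 < b) (h1 : 0 < θ)
    (h2 : θ ≤ Real.pi/2) :
    Real.arctan (Real.sin θ*a/(b+a*Real.cos θ)) +
      Real.arctan (Real.sin θ*b/(a+b*Real.cos θ)) = θ := by
  have hs : 0 < Real.sin θ := Real.sin_pos_of_pos_of_lt_pi h1 (by linarith [Real.pi_pos])
  have pyth : Real.sin θ^2 + Real.cos θ^2 = 1 := Real.sin_sq_add_cos_sq θ
  rcases lt_or_eq_of_le h2 with hlt | heq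
  · have hc : 0 < Real.cos θ := Real.cos_pos_of_mem_Ioo ⟨by linarith, hlt⟩
    set s := Real.sin θ
    set c := Real.cos θ
    have hd1 : 0 < b + a*c := by positivity
    have hd2 : 0 < a + b*c := by positivity
    have hxy : (s*a/(b+a*c)) * (s*b/(a+b*c)) < 1 := by
      rw [div_mul_div_comm, div_lt_one (by positivity)]
      have key : s^2*(a*b) = a*b - c^2*(a*b) := by linear_combination (a*b)*pyth
      nlinarith [mul_pos (mul_pos ha ha) hc, mul_pos (mul_pos hb hb) hc,
        mul_pos (mul_pos (mul_pos ha hb) hc) hc]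
    rw [Real.arctan_add hxy]
    have harg : (s*a/(b+a*c) + s*b/(a+b*c)) / (1 - s*a/(b+a*c) * (s*b/(a+b*c)))
        = Real.tan θ := by
      rw [Real.tan_eq_sin_div_cos]
      rw [div_eq_div_iff]
      · field_simp
        linear_combination (s*a*b) * pyth
      · have : 0 < 1 - s*a/(b+a*c) * (s*b/(a+b*c)) := by linarith
        positivity
      · exact hc.ne'
    rw [harg, Real.arctan_tan (by linarith) hlt]
  · subst heq
    rw [Real.cos_pi_div_two, Real.sin_pi_div_two]
    have e1 : (1:ℝ)*a/(b+a*0) = a/b := by ring_nf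
    have e2 : (1:ℝ)*b/(a+b*0) = (a/b)⁻¹ := by field_simp; simp
    rw [e1, e2, Real.arctan_inv_of_pos (by positivity)]
    ring

lemma sqrt_one_add_inv_sq_tendsto :
    Tendsto (fun u:ℝ => Real.sqrt (1+(u⁻¹)^2)) atTop (𝓝 1) := by
  have h1 : Tendsto (fun u:ℝ => 1+(u⁻¹)^2) atTop (𝓝 1) := by
    have := (tendsto_inv_atTop_zero (𝕜 := ℝ)).pow 2
    simpa using tendsto_const_nhds.add this
  have := h1.sqrt
  simpa using this

lemma rt_eq {u : ℝ} (hu : 0 < u) :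
    Real.sqrt (u^2+1) = u * Real.sqrt (1+(u⁻¹)^2) := by
  rw [← Real.sqrt_sq hu.le, ← Real.sqrt_mul (sq_nonneg u)]
  rw [Real.sqrt_sq hu.le]
  congr 1
  field_simp

lemma g_tendsto {s B : ℝ} (hB : 0 < B) :
    Tendsto (g s B) atTop (𝓝 (2*Real.arctan (s/B))) := by
  have hq := sqrt_one_add_inv_sq_tendsto
  have hfac : Tendsto (fun u:ℝ => 2/Real.sqrt (1+(u⁻¹)^2)) atTop (𝓝 2) := by
    have h0 : Tendsto (fun u:ℝ => (2:ℝ)/Real.sqrt (1+(u⁻¹)^2)) atTop (𝓝 (2/1)) :=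
      Tendsto.div tendsto_const_nhds hq one_ne_zero
    simpa using h0
  have harg : Tendsto (fun u:ℝ => Real.arctan (s*Real.sqrt (1+(u⁻¹)^2)/B)) atTop
      (𝓝 (Real.arctan (s/B))) := by
    have h2 : Tendsto (fun u:ℝ => s*Real.sqrt (1+(u⁻¹)^2)/B) atTop (𝓝 (s/B)) := by
      have := (hq.const_mul s).div_const B
      simpa using this
    exact (Real.continuous_arctan.tendsto _).comp h2
  have main := hfac.mul harg
  rw [show (2:ℝ)*Real.arctan (s/B) = 2 * Real.arctan (s/B) from rfl]
  apply main.congr'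
  filter_upwards [eventually_gt_atTop 0] with u hu
  unfold g
  rw [rt_eq hu]
  have h1 : 2*u/(u*Real.sqrt (1+(u⁻¹)^2)) = 2/Real.sqrt (1+(u⁻¹)^2) := by
    rw [mul_comm 2 u, mul_div_mul_left _ _ hu.ne']
  have hqpos : 0 < Real.sqrt (1+(u⁻¹)^2) := Real.sqrt_pos.2 (by positivity)
  have h2 : s*(u*Real.sqrt (1+(u⁻¹)^2))/(B*u) = s*Real.sqrt (1+(u⁻¹)^2)/B := by
    rw [show s*(u*Real.sqrt (1+(u⁻¹)^2)) = u*(s*Real.sqrt (1+(u⁻¹)^2)) by ring,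
      mul_comm B u, mul_div_mul_left _ _ hu.ne']
  rw [h1, h2]

lemma T_ray_tendsto {a b θ : ℝ} (ha : 0 < a) (hb : 0 < b) (h1 : 0 < θ)
    (h2 : θ ≤ Real.pi/2) :
    Tendsto (fun t => T (t*a) (t*b) θ) atTop
      (𝓝 (2*Real.arctan (Real.sin θ*a/(b+a*Real.cos θ)))) := by
  have hc := cos_theta_nonneg h1 h2
  have hB : 0 < (b+a*Real.cos θ)/a := by positivity
  have hcomp : Tendsto (fun t:ℝ => t*a) atTop atTop := Tendsto.atTop_mul_const ha tendsto_id
  have := (g_tendsto (s := Real.sin θ) hB).comp hcomp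
  have hval : Real.sin θ/((b+a*Real.cos θ)/a) = Real.sin θ*a/(b+a*Real.cos θ) := by
    field_simp
  rw [hval] at this
  apply this.congr'
  filter_upwards [eventually_gt_atTop 0] with t ht
  have e1 : T (t*a) (t*b) θ = g (Real.sin θ) ((t*b+t*a*Real.cos θ)/(t*a)) (t*a) :=
    T_eq_g (by positivity)
  have eB : (t*b+t*a*Real.cos θ)/(t*a) = (b+a*Real.cos θ)/a := by
    rw [show t*b+t*a*Real.cos θ = t*(b+a*Real.cos θ) by ring,
      mul_div_mul_left _ _ ht.ne']
  rw [Function.comp_apply, e1, eB]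

lemma T_pair_lt {a b θ : ℝ} (ha : 0 < a) (hb : 0 < b) (h1 : 0 < θ)
    (h2 : θ ≤ Real.pi/2) : T a b θ + T b a θ < 2*θ := by
  set h : ℝ → ℝ := fun t => T (t*a) (t*b) θ + T (t*b) (t*a) θ with hh
  have hmono : ∀ t₁ t₂, 0 < t₁ → t₁ < t₂ → h t₁ < h t₂ := fun t₁ t₂ h0 hlt =>
    add_lt_add (T_ray_lt ha hb h1 h2 h0 hlt) (T_ray_lt hb ha h1 h2 h0 hlt)
  have htend : Tendsto h atTop (𝓝 (2*θ)) := by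
    have := (T_ray_tendsto ha hb h1 h2).add (T_ray_tendsto hb ha h1 h2)
    have hval : 2*Real.arctan (Real.sin θ*a/(b+a*Real.cos θ)) +
        2*Real.arctan (Real.sin θ*b/(a+b*Real.cos θ)) = 2*θ := by
      linarith [arctan_pair ha hb h1 h2]
    rwa [hval] at this
  have h2le : h 2 ≤ 2*θ := by
    apply ge_of_tendsto htend
    filter_upwards [eventually_ge_atTop 2] with t ht
    rcases eq_or_lt_of_le ht with rfl | hlt
    · exact le_refl _
    · exact (hmono 2 t two_pos hlt).le
  have h12 : h 1 < h 2 := hmono 1 2 one_pos one_lt_two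
  have : h 1 = T a b θ + T b a θ := by simp only [hh, one_mul]
  linarith

lemma T_lt_two_theta {a b θ : ℝ} (ha : 0 < a) (hb : 0 < b) (h1 : 0 < θ)
    (h2 : θ ≤ Real.pi/2) : T a b θ < 2*θ := by
  linarith [T_pair_lt ha hb h1 h2, T_pos hb ha h1 h2]

lemma T_le_pi_mul {a b θ : ℝ} (ha : 0 < a) : T a b θ ≤ Real.pi * a := by
  unfold T
  have hr := rt_pos a
  have hr1 : 1 ≤ Real.sqrt (a^2+1) := by nlinarith [rt_sq a]
  have h1 : Real.arctan (Real.sin θ * Real.sqrt (a ^ 2 + 1) / (b + a * Real.cos θ))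
      ≤ Real.pi/2 := (Real.arctan_lt_pi_div_two _).le
  calc (2*a/Real.sqrt (a^2+1)) * Real.arctan _ ≤ (2*a/Real.sqrt (a^2+1)) * (Real.pi/2) :=
        mul_le_mul_of_nonneg_left h1 (by positivity)
    _ ≤ (2*a/1) * (Real.pi/2) := by
        apply mul_le_mul_of_nonneg_right _ (by positivity)
        apply div_le_div_of_nonneg_left (by positivity) one_pos hr1
    _ = Real.pi * a := by ring


lemma pi_div_sq_tendsto : Filter.Tendsto (fun x : ℝ => Real.pi/(2*x^2)) Filter.atTop (nhds 0) := by
  apply Filter.Tendsto.div_atTop tendsto_const_nhds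
  exact (tendsto_pow_atTop two_ne_zero).const_mul_atTop two_pos

lemma T_lower {a b θ : ℝ} (ha : 0 < a) (hb : 0 < b) (h1 : 0 < θ)
    (h2 : θ ≤ Real.pi/2) :
    2*Real.arctan (Real.sin θ*a/(b+a*Real.cos θ)) - Real.pi/(2*a^2) ≤ T a b θ := by
  have hs := sin_theta_pos h1 h2
  have hc := cos_theta_nonneg h1 h2
  have hr := rt_pos a
  have hr2 := rt_sq a
  set r := Real.sqrt (a^2+1) with hrdef
  set w := Real.sin θ * r / (b + a * Real.cos θ) with hwdef
  have hden : 0 < b + a*Real.cos θ := by positivity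
  have hwpos : 0 < w := by positivity
  have har : a ≤ r := le_rt ha.le
  have hm1 : Real.arctan (Real.sin θ*a/(b+a*Real.cos θ)) ≤ Real.arctan w := by
    apply Real.arctan_strictMono.monotone
    rw [hwdef]
    gcongr
  have hatw_pos : 0 < Real.arctan w := by
    have := Real.arctan_strictMono hwpos
    rwa [Real.arctan_zero] at this
  have hatw_le : Real.arctan w ≤ Real.pi/2 := (Real.arctan_lt_pi_div_two _).le
  have hfac_le : 2*a/r - 2 ≤ 0 := by
    rw [sub_nonpos, div_le_iff₀ hr]
    nlinarith
  have hfac_ge : -(1/a^2) ≤ 2*a/r - 2 := by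
    rw [← sub_nonneg]
    have h4 : 2*a/r - 2 - -(1/a^2) = (2*a^3 - (2*a^2-1)*r)/(r*a^2) := by
      field_simp
      ring
    rw [h4]
    apply div_nonneg _ (by positivity)
    rcases le_or_gt (2*a^2-1) 0 with hcase | hcase
    · nlinarith
    · nlinarith [sq_nonneg (2*a^3 - (2*a^2-1)*r), sq_nonneg r]
  have hTe : T a b θ = (2*a/r) * Real.arctan w := rfl
  have key : (2*a/r - 2) * Real.arctan w ≥ (2*a/r - 2) * (Real.pi/2) :=
    mul_le_mul_of_nonpos_left hatw_le hfac_le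
  have key2 : (2*a/r - 2) * (Real.pi/2) ≥ (-(1/a^2)) * (Real.pi/2) :=
    mul_le_mul_of_nonneg_right hfac_ge (by positivity)
  have expand : T a b θ - 2*Real.arctan w = (2*a/r - 2) * Real.arctan w := by
    rw [hTe]; ring
  have final : T a b θ - 2*Real.arctan w ≥ -(Real.pi/(2*a^2)) := by
    rw [expand]
    have : (-(1/a^2)) * (Real.pi/2) = -(Real.pi/(2*a^2)) := by ring
    linarith [key, key2]
  have h2A : 2*Real.arctan (Real.sin θ*a/(b+a*Real.cos θ)) ≤ 2*Real.arctan w := by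
    linarith
  linarith

lemma arctan_arg_tendsto {b θ : ℝ} (hb : 0 < b) (h1 : 0 < θ) (h2 : θ ≤ Real.pi/2) :
    Tendsto (fun x => Real.arctan (Real.sin θ*x/(b+x*Real.cos θ))) atTop (𝓝 θ) := by
  have hs := sin_theta_pos h1 h2
  rcases lt_or_eq_of_le h2 with hlt | heq
  · have hc : 0 < Real.cos θ := Real.cos_pos_of_mem_Ioo ⟨by linarith [Real.pi_pos], hlt⟩
    have hbx : Tendsto (fun x:ℝ => b*x⁻¹ + Real.cos θ) atTop (𝓝 (Real.cos θ)) := by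
      have h0 : Tendsto (fun x:ℝ => b*x⁻¹) atTop (𝓝 0) := by
        have := (tendsto_inv_atTop_zero (𝕜 := ℝ)).const_mul b
        simpa using this
      simpa using h0.add tendsto_const_nhds
    have harg : Tendsto (fun x:ℝ => Real.sin θ/(b*x⁻¹ + Real.cos θ)) atTop
        (𝓝 (Real.sin θ/Real.cos θ)) := tendsto_const_nhds.div hbx hc.ne'
    have := (Real.continuous_arctan.tendsto _).comp harg
    have hval : Real.arctan (Real.sin θ/Real.cos θ) = θ := by
      rw [← Real.tan_eq_sin_div_cos, Real.arctan_tan (by linarith [Real.pi_pos]) hlt]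
    rw [hval] at this
    apply this.congr'
    filter_upwards [eventually_gt_atTop 0] with x hx
    rw [Function.comp_apply]
    congr 1
    rw [div_eq_div_iff (by positivity) (by positivity)]
    field_simp
  · subst heq
    rw [Real.cos_pi_div_two, Real.sin_pi_div_two]
    have harg : Tendsto (fun x:ℝ => 1*x/(b+x*0)) atTop atTop := by
      have : Tendsto (fun x:ℝ => x/b) atTop atTop := tendsto_id.atTop_div_const hb
      apply this.congr
      intro x; ring_nf
    exact (Real.tendsto_arctan_atTop.mono_right nhdsWithin_le_nhds).comp harg

lemma T_tendsto_atTop {b θ : ℝ} (hb : 0 < b) (h1 : 0 < θ) (h2 : θ ≤ Real.pi/2) :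
    Tendsto (fun x => T x b θ) atTop (𝓝 (2*θ)) := by
  have hlow : Tendsto (fun x => 2*Real.arctan (Real.sin θ*x/(b+x*Real.cos θ))
      - Real.pi/(2*x^2)) atTop (𝓝 (2*θ)) := by
    have h0 : Tendsto (fun x:ℝ => Real.pi/(2*x^2)) atTop (𝓝 0) := by
      apply Tendsto.div_atTop tendsto_const_nhds
      exact (tendsto_pow_atTop (two_ne_zero)).const_mul_atTop two_pos
    have := ((arctan_arg_tendsto hb h1 h2).const_mul 2).sub h0
    simpa using this
  apply tendsto_of_tendsto_of_tendsto_of_le_of_le' hlow tendsto_const_nhds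
  · filter_upwards [eventually_gt_atTop 0] with x hx
    exact T_lower hx hb h1 h2
  · filter_upwards [eventually_gt_atTop 0] with x hx
    exact (T_lt_two_theta hx hb h1 h2).le

lemma T_continuousAt {θ : ℝ} (h1 : 0 < θ) (h2 : θ ≤ Real.pi/2) {p : ℝ×ℝ}
    (hp1 : 0 < p.1) (hp2 : 0 < p.2) :
    ContinuousAt (fun q : ℝ×ℝ => T q.1 q.2 θ) p := by
  have hc := cos_theta_nonneg h1 h2
  unfold T
  apply ContinuousAt.mul
  · exact ContinuousAt.div (by fun_prop) (by fun_prop) (rt_pos p.1).ne'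
  · apply Real.continuous_arctan.continuousAt.comp
    exact ContinuousAt.div (by fun_prop) (by fun_prop) (by positivity)

lemma T_nonneg {a b θ : ℝ} (ha : 0 < a) (hb : 0 < b) (h1 : 0 < θ) (h2 : θ ≤ Real.pi/2) :
    0 ≤ T a b θ := (T_pos ha hb h1 h2).le

lemma T_diag_lt {x y θ : ℝ} (hx : 0 < x) (h1 : 0 < θ) (h2 : θ ≤ Real.pi/2)
    (hxy : x < y) : T x x θ < T y y θ := by
  simpa using T_ray_lt (a := 1) (b := 1) one_pos one_pos h1 h2 hx hxy

lemma T_diag_tendsto {θ : ℝ} (h1 : 0 < θ) (h2 : θ ≤ Real.pi/2) :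
    Tendsto (fun x => T x x θ) atTop (𝓝 θ) := by
  have := T_ray_tendsto (a := 1) (b := 1) one_pos one_pos h1 h2
  have hval : 2*Real.arctan (Real.sin θ*1/(1+1*Real.cos θ)) = θ := by
    have := arctan_pair (a := 1) (b := 1) one_pos one_pos h1 h2
    linarith
  rw [hval] at this
  simpa using this

section Graph
variable {F E : Type*} [Fintype E] [DecidableEq F]

lemma Ttot_sum_swap (ε : E → F × F) (θ : E → ℝ) (k : F → ℝ) (F' : Finset F) :
    ∑ f ∈ F', Ttot ε θ k f =
      ∑ e : E, ((if (ε e).1 ∈ F' then T (k (ε e).1) (k (ε e).2) (θ e) else 0) +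
                (if (ε e).2 ∈ F' then T (k (ε e).2) (k (ε e).1) (θ e) else 0)) := by
  unfold Ttot
  rw [Finset.sum_comm]
  refine Finset.sum_congr rfl fun e _ => ?_
  rw [Finset.sum_add_distrib]
  congr 1
  · rw [Finset.sum_ite_eq F' (ε e).1 (fun f => T (k f) (k (ε e).2) (θ e))]
  · rw [Finset.sum_ite_eq F' (ε e).2 (fun f => T (k f) (k (ε e).1) (θ e))]

variable (ε : E → F × F) (θ : E → ℝ)

lemma Ttot_scale_lt (hθ : ∀ e, 0 < θ e ∧ θ e ≤ Real.pi/2) {k : F → ℝ}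
    (hk : ∀ g, 0 < k g) {μ : ℝ} (hμ : 1 < μ) {f : F}
    (hadjf : ∃ e : E, (ε e).1 = f ∨ (ε e).2 = f) :
    Ttot ε θ k f < Ttot ε θ (fun g => μ * k g) f := by
  obtain ⟨e₀, he₀⟩ := hadjf
  unfold Ttot
  have key : ∀ e : E, ∀ gg : F,
      T (k f) (k gg) (θ e) < T (μ * k f) (μ * k gg) (θ e) := fun e gg => by
    simpa using T_ray_lt (hk f) (hk gg) (hθ e).1 (hθ e).2 one_pos hμ
  apply Finset.sum_lt_sum
  · intro e _
    apply add_le_add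
    · split_ifs with h
      · exact (key e _).le
      · exact le_refl _
    · split_ifs with h
      · exact (key e _).le
      · exact le_refl _
  · refine ⟨e₀, Finset.mem_univ _, ?_⟩
    rcases he₀ with h | h
    · apply add_lt_add_of_lt_of_le
      · rw [if_pos h, if_pos h]; exact key e₀ _
      · split_ifs with h'
        · exact (key e₀ _).le
        · exact le_refl _
    · apply add_lt_add_of_le_of_lt
      · split_ifs with h'
        · exact (key e₀ _).le
        · exact le_refl _
      · rw [if_pos h, if_pos h]; exact key e₀ _

lemma Ttot_anti (hθ : ∀ e, 0 < θ e ∧ θ e ≤ Real.pi/2) {k k' : F → ℝ}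
    (hk : ∀ g, 0 < k g) (hle : ∀ g, k g ≤ k' g) {f : F} (hf : k f = k' f) :
    Ttot ε θ k' f ≤ Ttot ε θ k f := by
  unfold Ttot
  apply Finset.sum_le_sum
  intro e _
  apply add_le_add <;> split_ifs with h
  · rw [← hf]; exact T_anti_b' (hk f) (hk _) (hθ e).1 (hθ e).2 (hle _)
  · exact le_refl _
  · rw [← hf]; exact T_anti_b' (hk f) (hk _) (hθ e).1 (hθ e).2 (hle _)
  · exact le_refl _

lemma update_eval {k : F → ℝ} {f g : F} (x : ℝ) :
    Function.update k f x g = if g = f then x else k g := by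
  split_ifs with h
  · rw [h, Function.update_self]
  · rw [Function.update_of_ne h]

lemma psi_mono (hθ : ∀ e, 0 < θ e ∧ θ e ≤ Real.pi/2) {k : F → ℝ}
    (hk : ∀ g, 0 < k g) {f : F} {x y : ℝ} (hx : 0 < x) (hxy : x ≤ y) :
    Ttot ε θ (Function.update k f x) f ≤ Ttot ε θ (Function.update k f y) f := by
  rcases eq_or_lt_of_le hxy with rfl | hlt
  · exact le_refl _
  unfold Ttot
  apply Finset.sum_le_sum
  intro e _
  have h1 := (hθ e).1
  have h2 := (hθ e).2
  have main : ∀ gg : F, T x (Function.update k f x gg) (θ e)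
      ≤ T y (Function.update k f y gg) (θ e) := by
    intro gg
    rw [update_eval, update_eval]
    split_ifs with h'
    · exact (T_diag_lt hx h1 h2 hlt).le
    · exact (T_mono_a hx (hk _) h1 h2 hlt).le
  apply add_le_add <;> split_ifs with h
  · simpa only [Function.update_self] using main (ε e).2
  · exact le_refl _
  · simpa only [Function.update_self] using main (ε e).1
  · exact le_refl _

lemma psi_continuousAt (hθ : ∀ e, 0 < θ e ∧ θ e ≤ Real.pi/2) {k : F → ℝ}
    (hk : ∀ g, 0 < k g) {f : F} {x₀ : ℝ} (hx₀ : 0 < x₀) :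
    ContinuousAt (fun x => Ttot ε θ (Function.update k f x) f) x₀ := by
  have heq : (fun x => Ttot ε θ (Function.update k f x) f) = fun x => ∑ e : E,
      ((if (ε e).1 = f then T x (if (ε e).2 = f then x else k (ε e).2) (θ e) else 0) +
       (if (ε e).2 = f then T x (if (ε e).1 = f then x else k (ε e).1) (θ e) else 0)) := by
    funext x
    unfold Ttot
    refine Finset.sum_congr rfl fun e _ => ?_
    simp only [Function.update_self, update_eval, ↓reduceIte]
  rw [heq]
  have hc : ∀ e : E, ContinuousAt (fun x : ℝ =>
      (if (ε e).1 = f then T x (if (ε e).2 = f then x else k (ε e).2) (θ e) else 0) +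
      (if (ε e).2 = f then T x (if (ε e).1 = f then x else k (ε e).1) (θ e) else 0)) x₀ := by
    intro e
    have h1 := (hθ e).1
    have h2 := (hθ e).2
    have cdiag : ContinuousAt (fun x : ℝ => T x x (θ e)) x₀ :=
      Tendsto.comp (T_continuousAt h1 h2 (p := (x₀,x₀)) hx₀ hx₀)
        (continuousAt_id.prodMk continuousAt_id)
    have cleft : ∀ c : ℝ, 0 < c → ContinuousAt (fun x : ℝ => T x c (θ e)) x₀ :=
      fun c hcpos => Tendsto.comp (T_continuousAt h1 h2 (p := (x₀,c)) hx₀ hcpos)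
        (continuousAt_id.prodMk continuousAt_const)
    apply ContinuousAt.add
    · by_cases ha : (ε e).1 = f
      · by_cases hb : (ε e).2 = f
        · simp only [if_pos ha, if_pos hb]; exact cdiag
        · simp only [if_pos ha, if_neg hb]; exact cleft _ (hk _)
      · simp only [if_neg ha]; exact continuousAt_const
    · by_cases hb : (ε e).2 = f
      · by_cases ha : (ε e).1 = f
        · simp only [if_pos ha, if_pos hb]; exact cdiag
        · simp only [if_neg ha, if_pos hb]; exact cleft _ (hk _)
      · simp only [if_neg hb]; exact continuousAt_const
  exact tendsto_finset_sum _ (fun e _ => hc e)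

lemma psi_tendsto (hθ : ∀ e, 0 < θ e ∧ θ e ≤ Real.pi/2) {k : F → ℝ}
    (hk : ∀ g, 0 < k g) {f : F} :
    Tendsto (fun x => Ttot ε θ (Function.update k f x) f) atTop
      (𝓝 (∑ e ∈ Finset.univ.filter (fun e => (ε e).1 = f ∨ (ε e).2 = f), 2 * θ e)) := by
  have heq : (fun x => Ttot ε θ (Function.update k f x) f) = fun x => ∑ e : E,
      ((if (ε e).1 = f then T x (if (ε e).2 = f then x else k (ε e).2) (θ e) else 0) +
       (if (ε e).2 = f then T x (if (ε e).1 = f then x else k (ε e).1) (θ e) else 0)) := by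
    funext x
    unfold Ttot
    refine Finset.sum_congr rfl fun e _ => ?_
    simp only [Function.update_self, update_eval, ↓reduceIte]
  rw [heq, Finset.sum_filter]
  have ht : ∀ e : E, Tendsto (fun x : ℝ =>
      (if (ε e).1 = f then T x (if (ε e).2 = f then x else k (ε e).2) (θ e) else 0) +
      (if (ε e).2 = f then T x (if (ε e).1 = f then x else k (ε e).1) (θ e) else 0)) atTop
      (𝓝 (if (ε e).1 = f ∨ (ε e).2 = f then 2 * θ e else 0)) := by
    intro e
    have h1 := (hθ e).1
    have h2 := (hθ e).2
    by_cases ha : (ε e).1 = f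
    · by_cases hb : (ε e).2 = f
      · simp only [if_pos ha, if_pos hb, if_pos (Or.inl ha)]
        have := (T_diag_tendsto h1 h2).add (T_diag_tendsto h1 h2)
        rw [show θ e + θ e = 2 * θ e by ring] at this
        exact this
      · simp only [if_pos ha, if_neg hb, if_pos (Or.inl ha)]
        have := (T_tendsto_atTop (hk (ε e).2) h1 h2).add
          (tendsto_const_nhds : Tendsto (fun _ : ℝ => (0:ℝ)) atTop (𝓝 0))
        rw [add_zero] at this
        exact this
    · by_cases hb : (ε e).2 = f
      · simp only [if_neg ha, if_pos hb, if_pos (Or.inr hb)]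
        have := (tendsto_const_nhds : Tendsto (fun _ : ℝ => (0:ℝ)) atTop (𝓝 0)).add
          (T_tendsto_atTop (hk (ε e).1) h1 h2)
        rw [zero_add] at this
        exact this
      · simp only [if_neg ha, if_neg hb, if_neg (by tauto : ¬((ε e).1 = f ∨ (ε e).2 = f))]
        simpa using (tendsto_const_nhds : Tendsto (fun _ : ℝ => (0:ℝ)) atTop (𝓝 0))
  exact tendsto_finset_sum _ (fun e _ => ht e)

lemma Ttot_continuousAt (hθ : ∀ e, 0 < θ e ∧ θ e ≤ Real.pi/2) {kl : F → ℝ}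
    (hk : ∀ g, 0 < kl g) (f : F) :
    ContinuousAt (fun k : F → ℝ => Ttot ε θ k f) kl := by
  unfold Ttot
  have hc : ∀ e : E, ContinuousAt (fun k : F → ℝ =>
      (if (ε e).1 = f then T (k f) (k (ε e).2) (θ e) else 0) +
      (if (ε e).2 = f then T (k f) (k (ε e).1) (θ e) else 0)) kl := by
    intro e
    have h1 := (hθ e).1
    have h2 := (hθ e).2
    have cT : ∀ g : F, ContinuousAt (fun k : F → ℝ => T (k f) (k g) (θ e)) kl :=
      fun g => by
        have hpair : ContinuousAt (fun k : F → ℝ => (k f, k g)) kl :=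
          ((continuous_apply f).continuousAt).prodMk ((continuous_apply g).continuousAt)
        exact Tendsto.comp (T_continuousAt h1 h2 (p := (kl f, kl g)) (hk f) (hk g)) hpair
    apply ContinuousAt.add
    · by_cases ha : (ε e).1 = f
      · simp only [if_pos ha]; exact cT _
      · simp only [if_neg ha]; exact continuousAt_const
    · by_cases hb : (ε e).2 = f
      · simp only [if_pos hb]; exact cT _
      · simp only [if_neg hb]; exact continuousAt_const
  exact tendsto_finset_sum _ (fun e _ => hc e)

end Graph

section Main
variable {F E : Type*} [Fintype F] [Fintype E] [Nonempty F] [DecidableEq F]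

lemma solve_step (ε : E → F × F) (θ : E → ℝ) (hθ : ∀ e, 0 < θ e ∧ θ e ≤ Real.pi/2)
    {k : F → ℝ} (hk : ∀ g, 0 < k g) {f : F} {t : ℝ}
    (hsub : Ttot ε θ k f ≤ t)
    (hlt : t < ∑ e ∈ Finset.univ.filter (fun e => (ε e).1 = f ∨ (ε e).2 = f), 2*θ e) :
    ∃ x, k f ≤ x ∧ Ttot ε θ (Function.update k f x) f = t := by
  classical
  have hev : ∀ᶠ x in atTop, t < Ttot ε θ (Function.update k f x) f :=
    (psi_tendsto ε θ hθ hk).eventually (eventually_gt_nhds hlt)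
  obtain ⟨x₂, hx₂⟩ := (hev.and (eventually_ge_atTop (k f))).exists
  have h0 : Ttot ε θ (Function.update k f (k f)) f = Ttot ε θ k f := by
    rw [Function.update_eq_self]
  have hcontOn : ContinuousOn (fun x => Ttot ε θ (Function.update k f x) f)
      (Set.Icc (k f) x₂) := fun x hx =>
    (psi_continuousAt ε θ hθ hk (lt_of_lt_of_le (hk f) hx.1)).continuousWithinAt
  have hIvt := intermediate_value_Icc hx₂.2 hcontOn
  have hmem : t ∈ Set.Icc (Ttot ε θ (Function.update k f (k f)) f)
      (Ttot ε θ (Function.update k f x₂) f) := ⟨by rw [h0]; exact hsub, hx₂.1.le⟩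
  obtain ⟨x, hxIcc, hxval⟩ := hIvt hmem
  exact ⟨x, hxIcc.1, hxval⟩
end Main

theorem stmt_11 {F E : Type*} [Fintype F] [Fintype E] [Nonempty F] [DecidableEq F]
    (ε : E → F × F) (θ : E → ℝ) (hθ : ∀ e, 0 < θ e ∧ θ e ≤ Real.pi / 2)
    (hadj : ∀ f : F, ∃ e : E, (ε e).1 = f ∨ (ε e).2 = f)
    (That : F → ℝ) (hpos : ∀ f, 0 < That f) :
    (∀ F' : Finset F, F'.Nonempty →
        ∑ f ∈ F', That f <
          ∑ e ∈ Finset.univ.filter (fun e => (ε e).1 ∈ F' ∨ (ε e).2 ∈ F'),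
            2 * θ e) ↔
    (∃! k : F → ℝ, (∀ f, 0 < k f) ∧ ∀ f, Ttot ε θ k f = That f) := by
  classical
  -- uniqueness, used in both directions
  have uniq : ∀ k k' : F → ℝ, (∀ f, 0 < k f) → (∀ f, Ttot ε θ k f = That f) →
      (∀ f, 0 < k' f) → (∀ f, Ttot ε θ k' f = That f) → k = k' := by
    suffices hle : ∀ k k' : F → ℝ, (∀ f, 0 < k f) → (∀ f, Ttot ε θ k f = That f) →
        (∀ f, 0 < k' f) → (∀ f, Ttot ε θ k' f = That f) → ∀ f, k f ≤ k' f by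
      intro k k' h1 h2 h1' h2'
      funext f
      exact le_antisymm (hle k k' h1 h2 h1' h2' f) (hle k' k h1' h2' h1 h2 f)
    intro k k' hk hsol hk' hsol'
    by_contra hcon
    push_neg at hcon
    obtain ⟨f₁, hf₁⟩ := hcon
    obtain ⟨f₀, _, hmax⟩ := Finset.exists_max_image Finset.univ (fun f => k f / k' f)
      ⟨f₁, Finset.mem_univ _⟩
    set μ := k f₀ / k' f₀ with hμdef
    have hμ1 : 1 < μ := by
      have h1 : (1:ℝ) < k f₁ / k' f₁ := (one_lt_div (hk' f₁)).2 hf₁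
      exact lt_of_lt_of_le h1 (hmax f₁ (Finset.mem_univ _))
    have hkf₀ : k f₀ = μ * k' f₀ := by
      rw [hμdef, div_mul_cancel₀ _ (hk' f₀).ne']
    have hgle : ∀ g, k g ≤ μ * k' g := by
      intro g
      have := hmax g (Finset.mem_univ _)
      rw [div_le_iff₀ (hk' g)] at this
      linarith [this]
    have c1 : Ttot ε θ (fun g => μ * k' g) f₀ ≤ Ttot ε θ k f₀ :=
      Ttot_anti ε θ hθ hk hgle hkf₀
    have c2 : Ttot ε θ k' f₀ < Ttot ε θ (fun g => μ * k' g) f₀ :=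
      Ttot_scale_lt ε θ hθ hk' hμ1 (hadj f₀)
    rw [hsol f₀] at c1
    rw [hsol' f₀] at c2
    linarith
  constructor
  · -- hard direction: existence
    intro hcond
    -- initial subsolution: small constant
    set m : ℝ := Finset.univ.inf' Finset.univ_nonempty That with hmdef
    have hm : 0 < m := (Finset.lt_inf'_iff _).2 (fun f _ => hpos f)
    have hmle : ∀ f, m ≤ That f := fun f => Finset.inf'_le _ (Finset.mem_univ f)
    set δ : ℝ := m / (2*Real.pi*(Fintype.card E + 1)) with hδdef
    have hpi := Real.pi_pos
    have hδ : 0 < δ := by positivity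
    have hinit : ∀ f, Ttot ε θ (fun _ => δ) f ≤ That f := by
      intro f
      have hbound : Ttot ε θ (fun _ => δ) f ≤ (Fintype.card E : ℝ) * (2*Real.pi*δ) := by
        unfold Ttot
        calc ∑ e : E, ((if (ε e).1 = f then T δ δ (θ e) else 0) +
              (if (ε e).2 = f then T δ δ (θ e) else 0))
            ≤ ∑ _e : E, (Real.pi*δ + Real.pi*δ) := by
              apply Finset.sum_le_sum
              intro e _
              have hT : T δ δ (θ e) ≤ Real.pi*δ := T_le_pi_mul hδ
              have hT0 : (0:ℝ) ≤ Real.pi*δ := by positivity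
              apply add_le_add <;> split_ifs <;> first | exact hT | exact hT0
          _ = (Fintype.card E : ℝ) * (2*Real.pi*δ) := by
              rw [Finset.sum_const, Finset.card_univ, nsmul_eq_mul]
              ring
      have hlt : (Fintype.card E : ℝ) * (2*Real.pi*δ) < m := by
        have heq : (Fintype.card E : ℝ) * (2*Real.pi*δ) =
            m * ((Fintype.card E : ℝ)/(Fintype.card E + 1)) := by
          rw [hδdef]; field_simp
        rw [heq]
        have hfrac : (Fintype.card E : ℝ)/(Fintype.card E + 1) < 1 := by
          rw [div_lt_one (by positivity)]
          linarith
        exact mul_lt_of_lt_one_right hm hfrac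
      linarith [hmle f]
    -- one step of the iteration
    have hstep : ∀ k : F → ℝ, (∀ g, 0 < k g) → (∀ g, Ttot ε θ k g ≤ That g) →
        ∃ k' : F → ℝ, ((∀ g, 0 < k' g) ∧ (∀ g, Ttot ε θ k' g ≤ That g)) ∧
          (∀ g, k g ≤ k' g) ∧
          (∀ f, Ttot ε θ (Function.update k f (k' f)) f = That f) := by
      intro k hk hsub
      have hsolv : ∀ f, ∃ x, k f ≤ x ∧ Ttot ε θ (Function.update k f x) f = That f := by
        intro f
        apply solve_step ε θ hθ hk (hsub f)
        have := hcond {f} ⟨f, Finset.mem_singleton_self f⟩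
        simpa using this
      choose x hx1 hx2 using hsolv
      have hxpos : ∀ g, 0 < x g := fun g => lt_of_lt_of_le (hk g) (hx1 g)
      refine ⟨x, ⟨hxpos, ?_⟩, hx1, hx2⟩
      intro f
      have hanti : Ttot ε θ x f ≤ Ttot ε θ (Function.update k f (x f)) f := by
        apply Ttot_anti ε θ hθ (k := Function.update k f (x f)) (k' := x)
        · intro g
          rw [update_eval]
          split_ifs
          · exact hxpos f
          · exact hk g
        · intro g
          rw [update_eval]
          split_ifs with h
          · rw [h]
          · exact hx1 g
        · rw [Function.update_self]
      linarith [hx2 f]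
    -- build the monotone sequence
    set Pk : (F → ℝ) → Prop :=
      fun k => (∀ g, 0 < k g) ∧ (∀ g, Ttot ε θ k g ≤ That g) with hPkdef
    have hstep' : ∀ p : {k : F → ℝ // Pk k}, ∃ q : {k : F → ℝ // Pk k},
        (∀ g, p.1 g ≤ q.1 g) ∧
        (∀ f, Ttot ε θ (Function.update p.1 f (q.1 f)) f = That f) := by
      rintro ⟨k, hk1, hk2⟩
      obtain ⟨k', hP, hge, hsol⟩ := hstep k hk1 hk2
      exact ⟨⟨k', hP⟩, hge, hsol⟩
    choose stp hstp1 hstp2 using hstep'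
    set seq : ℕ → {k : F → ℝ // Pk k} :=
      fun n => stp^[n] ⟨(fun _ => δ), fun _ => hδ, hinit⟩ with hseqdef
    have hseq_succ : ∀ n, seq (n+1) = stp (seq n) := fun n => by
      rw [hseqdef]
      exact Function.iterate_succ_apply' stp n _
    have hmono : ∀ n g, (seq n).1 g ≤ (seq (n+1)).1 g := fun n g => by
      rw [hseq_succ]; exact hstp1 (seq n) g
    have hmono' : ∀ g, Monotone (fun n => (seq n).1 g) :=
      fun g => monotone_nat_of_le_succ (fun n => hmono n g)
    have hsolstep : ∀ n f,
        Ttot ε θ (Function.update (seq n).1 f ((seq (n+1)).1 f)) f = That f := by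
      intro n f
      rw [hseq_succ]
      exact hstp2 (seq n) f
    -- boundedness of the sequence
    have hbdd : ∀ g, BddAbove (Set.range (fun n => (seq n).1 g)) := by
      by_contra hcon
      push_neg at hcon
      obtain ⟨g₀, hg₀⟩ := hcon
      set S : Finset F := Finset.univ.filter
        (fun g => ¬ BddAbove (Set.range (fun n => (seq n).1 g))) with hSdef
      have hS : S.Nonempty := ⟨g₀, by simp [hSdef, hg₀]⟩
      have hcondS := hcond S hS
      have hout : ∀ g, g ∉ S → BddAbove (Set.range (fun n => (seq n).1 g)) := by
        intro g hg
        by_contra hbad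
        exact hg (by simp [hSdef, hbad])
      set C : F → ℝ := fun g => ⨆ n, (seq n).1 g with hCdef
      have hCle : ∀ g, g ∉ S → ∀ n, (seq n).1 g ≤ C g :=
        fun g hg n => le_ciSup (hout g hg) n
      have hCpos : ∀ g, g ∉ S → 0 < C g :=
        fun g hg => lt_of_lt_of_le ((seq 0).2.1 g) (hCle g hg 0)
      have hdiv : ∀ g, g ∈ S → Tendsto (fun n => (seq n).1 g) atTop atTop := by
        intro g hg
        apply tendsto_atTop_atTop_of_monotone' (hmono' g)
        simpa [hSdef] using hg
      set LB : E → ℕ → ℝ := fun e n =>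
        if (ε e).1 ∈ S then
          (if (ε e).2 ∈ S then
            2*θ e - Real.pi/(2*((seq n).1 (ε e).1)^2) - Real.pi/(2*((seq n).1 (ε e).2)^2)
          else
            2*Real.arctan (Real.sin (θ e)*((seq n).1 (ε e).1)/
                (C (ε e).2 + ((seq n).1 (ε e).1)*Real.cos (θ e)))
              - Real.pi/(2*((seq n).1 (ε e).1)^2))
        else
          (if (ε e).2 ∈ S then
            2*Real.arctan (Real.sin (θ e)*((seq n).1 (ε e).2)/
                (C (ε e).1 + ((seq n).1 (ε e).2)*Real.cos (θ e)))
              - Real.pi/(2*((seq n).1 (ε e).2)^2)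
          else 0) with hLBdef
      have key1 : ∀ (n : ℕ) (e : E), LB e n ≤
          (if (ε e).1 ∈ S then T ((seq n).1 (ε e).1) ((seq n).1 (ε e).2) (θ e) else 0) +
          (if (ε e).2 ∈ S then T ((seq n).1 (ε e).2) ((seq n).1 (ε e).1) (θ e) else 0) := by
        intro n e
        have h1 := (hθ e).1
        have h2 := (hθ e).2
        have hp1 := (seq n).2.1 (ε e).1
        have hp2 := (seq n).2.1 (ε e).2
        simp only [hLBdef]
        by_cases ha : (ε e).1 ∈ S <;> by_cases hb : (ε e).2 ∈ S
        · rw [if_pos ha, if_pos hb, if_pos ha, if_pos hb]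
          have l1 := T_lower hp1 hp2 h1 h2
          have l2 := T_lower hp2 hp1 h1 h2
          have lp := arctan_pair hp1 hp2 h1 h2
          linarith
        · rw [if_pos ha, if_neg hb, if_pos ha, if_neg hb, add_zero]
          have hb' : (seq n).1 (ε e).2 ≤ C (ε e).2 := hCle _ hb n
          have m1 : T ((seq n).1 (ε e).1) (C (ε e).2) (θ e) ≤
              T ((seq n).1 (ε e).1) ((seq n).1 (ε e).2) (θ e) :=
            T_anti_b' hp1 hp2 h1 h2 hb'
          have m2 := T_lower hp1 (hCpos _ hb) h1 h2
          linarith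
        · rw [if_neg ha, if_pos hb, if_neg ha, if_pos hb, zero_add]
          have ha' : (seq n).1 (ε e).1 ≤ C (ε e).1 := hCle _ ha n
          have m1 : T ((seq n).1 (ε e).2) (C (ε e).1) (θ e) ≤
              T ((seq n).1 (ε e).2) ((seq n).1 (ε e).1) (θ e) :=
            T_anti_b' hp2 hp1 h1 h2 ha'
          have m2 := T_lower hp2 (hCpos _ ha) h1 h2
          linarith
        · rw [if_neg ha, if_neg hb, if_neg ha, if_neg hb, add_zero]
      have key2 : ∀ n : ℕ, ∑ e : E, LB e n ≤ ∑ f ∈ S, That f := by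
        intro n
        have hA : ∑ f ∈ S, Ttot ε θ (seq n).1 f ≤ ∑ f ∈ S, That f :=
          Finset.sum_le_sum (fun f _ => (seq n).2.2 f)
        have hB := Ttot_sum_swap ε θ (seq n).1 S
        have hC' : ∑ e : E, LB e n ≤ ∑ e : E,
            ((if (ε e).1 ∈ S then T ((seq n).1 (ε e).1) ((seq n).1 (ε e).2) (θ e) else 0) +
             (if (ε e).2 ∈ S then T ((seq n).1 (ε e).2) ((seq n).1 (ε e).1) (θ e) else 0)) :=
          Finset.sum_le_sum (fun e _ => key1 n e)
        linarith
      have key3 : Tendsto (fun n => ∑ e : E, LB e n) atTop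
          (𝓝 (∑ e ∈ Finset.univ.filter (fun e => (ε e).1 ∈ S ∨ (ε e).2 ∈ S), 2*θ e)) := by
        rw [Finset.sum_filter]
        apply tendsto_finset_sum
        intro e _
        have h1 := (hθ e).1
        have h2 := (hθ e).2
        by_cases ha : (ε e).1 ∈ S <;> by_cases hb : (ε e).2 ∈ S
        · have hta := pi_div_sq_tendsto.comp (hdiv _ ha)
          have htb := pi_div_sq_tendsto.comp (hdiv _ hb)
          have := (tendsto_const_nhds (x := 2*θ e) (f := atTop)).sub hta |>.sub htb
          rw [sub_zero, sub_zero] at this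
          rw [if_pos (Or.inl ha)]
          apply this.congr
          intro n
          simp only [hLBdef, if_pos ha, if_pos hb, Function.comp_apply]
        · have hta := pi_div_sq_tendsto.comp (hdiv _ ha)
          have harc := (arctan_arg_tendsto (hCpos _ hb) h1 h2).comp (hdiv _ ha)
          have := (harc.const_mul 2).sub hta
          rw [sub_zero] at this
          rw [if_pos (Or.inl ha)]
          apply this.congr
          intro n
          simp only [hLBdef, if_pos ha, if_neg hb, Function.comp_apply]
        · have htb := pi_div_sq_tendsto.comp (hdiv _ hb)
          have harc := (arctan_arg_tendsto (hCpos _ ha) h1 h2).comp (hdiv _ hb)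
          have := (harc.const_mul 2).sub htb
          rw [sub_zero] at this
          rw [if_pos (Or.inr hb)]
          apply this.congr
          intro n
          simp only [hLBdef, if_neg ha, if_pos hb, Function.comp_apply]
        · rw [if_neg (by tauto : ¬((ε e).1 ∈ S ∨ (ε e).2 ∈ S))]
          exact tendsto_const_nhds.congr
            (fun n => by simp only [hLBdef, if_neg ha, if_neg hb])
      have hge := le_of_tendsto key3 (Eventually.of_forall key2)
      linarith
    -- pass to the limit
    have hktend : ∀ g, Tendsto (fun n => (seq n).1 g) atTop (𝓝 (⨆ n, (seq n).1 g)) :=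
      fun g => tendsto_atTop_ciSup (hmono' g) (hbdd g)
    set kl : F → ℝ := fun g => ⨆ n, (seq n).1 g with hkldef
    have hklpos : ∀ g, 0 < kl g :=
      fun g => lt_of_lt_of_le ((seq 0).2.1 g) (le_ciSup (hbdd g) 0)
    have hsol : ∀ f, Ttot ε θ kl f = That f := by
      intro f
      have hupd : Tendsto (fun n => Function.update (seq n).1 f ((seq (n+1)).1 f))
          atTop (𝓝 kl) := by
        rw [tendsto_pi_nhds]
        intro g
        by_cases h : g = f
        · subst h
          have hshift : Tendsto (fun n => (seq (n+1)).1 g) atTop (𝓝 (kl g)) :=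
            (hktend g).comp (tendsto_add_atTop_nat 1)
          apply hshift.congr
          intro n
          rw [Function.update_self]
        · apply (hktend g).congr
          intro n
          rw [Function.update_of_ne h]
      have hc := (Ttot_continuousAt ε θ hθ hklpos f).tendsto.comp hupd
      have hconst : Tendsto (fun _ : ℕ => That f) atTop (𝓝 (Ttot ε θ kl f)) := by
        apply hc.congr
        intro n
        exact hsolstep n f
      exact tendsto_nhds_unique hconst tendsto_const_nhds
    refine ⟨kl, ⟨hklpos, hsol⟩, ?_⟩
    rintro y ⟨hy1, hy2⟩
    exact uniq y kl hy1 hy2 hklpos hsol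
  · -- easy direction
    rintro ⟨k, ⟨hk, hsol⟩, -⟩ F' hF'
    have hswap := Ttot_sum_swap ε θ k F'
    have hsum : ∑ f ∈ F', That f = ∑ e : E,
        ((if (ε e).1 ∈ F' then T (k (ε e).1) (k (ε e).2) (θ e) else 0) +
         (if (ε e).2 ∈ F' then T (k (ε e).2) (k (ε e).1) (θ e) else 0)) := by
      rw [← hswap]
      exact Finset.sum_congr rfl (fun f _ => (hsol f).symm)
    rw [hsum, Finset.sum_filter]
    obtain ⟨f₀, hf₀⟩ := hF'
    obtain ⟨e₀, he₀⟩ := hadj f₀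
    have hterm : ∀ e : E,
        ((if (ε e).1 ∈ F' then T (k (ε e).1) (k (ε e).2) (θ e) else 0) +
         (if (ε e).2 ∈ F' then T (k (ε e).2) (k (ε e).1) (θ e) else 0)) ≤
        (if (ε e).1 ∈ F' ∨ (ε e).2 ∈ F' then 2 * θ e else 0) := by
      intro e
      have h1 := (hθ e).1
      have h2 := (hθ e).2
      by_cases ha : (ε e).1 ∈ F' <;> by_cases hb : (ε e).2 ∈ F'
      · rw [if_pos ha, if_pos hb, if_pos (Or.inl ha)]
        exact (T_pair_lt (hk _) (hk _) h1 h2).le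
      · rw [if_pos ha, if_neg hb, if_pos (Or.inl ha), add_zero]
        exact (T_lt_two_theta (hk _) (hk _) h1 h2).le
      · rw [if_neg ha, if_pos hb, if_pos (Or.inr hb), zero_add]
        exact (T_lt_two_theta (hk _) (hk _) h1 h2).le
      · rw [if_neg ha, if_neg hb, if_neg (by tauto)]
        norm_num
    apply Finset.sum_lt_sum (fun e _ => hterm e)
    refine ⟨e₀, Finset.mem_univ _, ?_⟩
    have hP : (ε e₀).1 ∈ F' ∨ (ε e₀).2 ∈ F' := by
      rcases he₀ with h | h
      · exact Or.inl (h ▸ hf₀)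
      · exact Or.inr (h ▸ hf₀)
    rw [if_pos hP]
    have h1 := (hθ e₀).1
    have h2 := (hθ e₀).2
    by_cases ha : (ε e₀).1 ∈ F' <;> by_cases hb : (ε e₀).2 ∈ F'
    · rw [if_pos ha, if_pos hb]
      exact T_pair_lt (hk _) (hk _) h1 h2
    · rw [if_pos ha, if_neg hb, add_zero]
      exact T_lt_two_theta (hk _) (hk _) h1 h2
    · rw [if_neg ha, if_pos hb, zero_add]
      exact T_lt_two_theta (hk _) (hk _) h1 h2
    · tauto
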